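/- Let M be a Garside monoid with atom set S, and for each g in M let τ_g denote the smallest quasi-central element of M left-divisible by g (which exists). Then for any two atoms s, t in S, either τ_s = τ_t, or the greatest common divisors τ_s ∧ τ_t (for left-divisibility) and τ_s ∧̃ τ_t (for right-divisibility) are both equal to 1. In either case τ_s τ_t = τ_t τ_s. -/

import Mathlib

/-!
For an atom `r`, `τ r` is an atom of the submonoid `QZ(M)` of quasi-central elements: if
`τ r = p * q` with `p, q` quasi-central and `r ∤ p`, then conjugating `r` past `p` gives an atom
`r'` with `r * p = p * r'`, and `lcm(r, p) = p * r'` forces `r' ∣ q`. Then `τ r = r * y * p` with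
`r * y` quasi-central and left-divisible by `r`, so minimality of `τ r` gives `p = 1`.

If `τ s ≠ τ t`, a common divisor `d ≠ 1` of `τ s` and `τ t` would be left-divisible by an atom
`u`, and the `QZ(M)`-atom `τ u` would divide, hence equal, both of them; so both gcds are trivial
(a right divisor of a quasi-central element is also a left divisor). Finally `QZ(M)` is closed
under lcms, and for `QZ(M)`-atoms `a ∤ b`, `b ∤ a` this gives `a * b = lcm(a, b) = b * a`.
-/

/-- Left-divisibility in a monoid. -/
def LeftDvd {M : Type*} [Monoid M] (a b : M) : Prop := ∃ c, b = a * c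

/-- Right-divisibility in a monoid. -/
def GarsideRightDvd {M : Type*} [Monoid M] (a b : M) : Prop := ∃ c, b = c * a

/-- An element `g` of a monoid is quasi-central if `gM = Mg` as sets. -/
def QuasiCentral {M : Type*} [Monoid M] (g : M) : Prop :=
  ∀ x : M, (∃ m, x = g * m) ↔ (∃ m, x = m * g)

/-- An atom of a monoid: a non-identity element that is not a product of two
non-identity elements. -/
def MonAtom {M : Type*} [Monoid M] (a : M) : Prop :=
  a ≠ 1 ∧ ∀ b c : M, a = b * c → b = 1 ∨ c = 1

/-- A Garside-monoid structure on a monoid `M`: `M` is cancellative, noetherian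
for the factor relation, its left- and right-divisibility orders are lattices,
and it has a quasi-central Garside element `Δ` whose powers are left-divisible
by every element. -/
structure GarsideStruct (M : Type*) [Monoid M] where
  cancel_left : ∀ a b c : M, a * b = a * c → b = c
  cancel_right : ∀ a b c : M, b * a = c * a → b = c
  wf : WellFounded (fun w w' : M => (∃ w1 w2, w' = w1 * w * w2) ∧ w ≠ w')
  lcmL : M → M → M
  lcmL_left : ∀ a b, LeftDvd a (lcmL a b)
  lcmL_right : ∀ a b, LeftDvd b (lcmL a b)
  lcmL_min : ∀ a b k, LeftDvd a k → LeftDvd b k → LeftDvd (lcmL a b) k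
  gcdL : M → M → M
  gcdL_left : ∀ a b, LeftDvd (gcdL a b) a
  gcdL_right : ∀ a b, LeftDvd (gcdL a b) b
  gcdL_max : ∀ a b k, LeftDvd k a → LeftDvd k b → LeftDvd k (gcdL a b)
  lcmR : M → M → M
  lcmR_left : ∀ a b, GarsideRightDvd a (lcmR a b)
  lcmR_right : ∀ a b, GarsideRightDvd b (lcmR a b)
  lcmR_min : ∀ a b k, GarsideRightDvd a k → GarsideRightDvd b k → GarsideRightDvd (lcmR a b) k
  gcdR : M → M → M
  gcdR_left : ∀ a b, GarsideRightDvd (gcdR a b) a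
  gcdR_right : ∀ a b, GarsideRightDvd (gcdR a b) b
  gcdR_max : ∀ a b k, GarsideRightDvd k a → GarsideRightDvd k b → GarsideRightDvd k (gcdR a b)
  delta : M
  delta_qc : QuasiCentral delta
  delta_pow : ∀ g : M, ∃ n : ℕ, LeftDvd g (delta ^ n)

section

variable {M : Type*} [Monoid M]

theorem LeftDvd.refl (a : M) : LeftDvd a a := ⟨1, (mul_one a).symm⟩

theorem LeftDvd.trans {a b c : M} : LeftDvd a b → LeftDvd b c → LeftDvd a c
  | ⟨x, hx⟩, ⟨y, hy⟩ => ⟨x * y, by rw [hy, hx, mul_assoc]⟩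

theorem QuasiCentral.ldvd_mul_left {a x : M} (ha : QuasiCentral a) (h : LeftDvd a x) (m : M) :
    LeftDvd a (m * x) := by
  obtain ⟨c, rfl⟩ := h
  obtain ⟨m', hm'⟩ := (ha (m * a)).mpr ⟨m, rfl⟩
  exact ⟨m' * c, by rw [← mul_assoc, hm', mul_assoc]⟩

theorem QuasiCentral.rdvd_mul_right {a x : M} (ha : QuasiCentral a) (h : GarsideRightDvd a x)
    (m : M) : GarsideRightDvd a (x * m) := by
  obtain ⟨c, rfl⟩ := h
  obtain ⟨m', hm'⟩ := (ha (a * m)).mp ⟨m, rfl⟩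
  exact ⟨c * m', by rw [mul_assoc, hm', mul_assoc]⟩

def IsQZAtom (a : M) : Prop :=
  QuasiCentral a ∧ a ≠ 1 ∧
    ∀ p q : M, QuasiCentral p → QuasiCentral q → a = p * q → p = 1 ∨ q = 1

namespace GarsideStruct

theorem eq_one_of_eq_mul_mul (GS : GarsideStruct M) {x u v : M} (h : x = u * x * v) :
    u = 1 ∧ v = 1 := by
  have hux : u * x = x := by
    by_contra hne
    exact GS.wf.asymmetric x (u * x) ⟨⟨u, 1, (mul_one _).symm⟩, Ne.symm hne⟩
      ⟨⟨1, v, by rw [one_mul]; exact h⟩, hne⟩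
  rw [hux] at h
  exact ⟨GS.cancel_right x u 1 (by rw [hux, one_mul]),
    GS.cancel_left x v 1 (by rw [mul_one]; exact h.symm)⟩

theorem mul_eq_one (GS : GarsideStruct M) {c d : M} (h : c * d = 1) : c = 1 ∧ d = 1 :=
  GS.eq_one_of_eq_mul_mul (by rw [mul_one]; exact h.symm)

theorem eq_one_of_ldvd_one (GS : GarsideStruct M) {a : M} (h : LeftDvd a 1) : a = 1 :=
  let ⟨_, hc⟩ := h; (GS.mul_eq_one hc.symm).1

theorem ldvd_antisymm (GS : GarsideStruct M) {a b : M} (hab : LeftDvd a b) (hba : LeftDvd b a) :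
    a = b := by
  obtain ⟨c, hc⟩ := hab
  obtain ⟨d, hd⟩ := hba
  have hcd : c * d = 1 := GS.cancel_left a _ _ (by rw [mul_one, ← mul_assoc, ← hc, ← hd])
  rw [hc, (GS.mul_eq_one hcd).1, mul_one]

theorem ldvd_of_rdvd_of_quasiCentral (GS : GarsideStruct M) {a d : M} (ha : QuasiCentral a)
    (h : GarsideRightDvd d a) : LeftDvd d a := by
  obtain ⟨y, hy⟩ := h
  obtain ⟨u, hu⟩ := (ha (y * a)).mpr ⟨y, rfl⟩
  exact ⟨u, GS.cancel_left y a (d * u) (by rw [hu, hy, mul_assoc])⟩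

theorem quasiCentral_of_eq_mul_left (GS : GarsideStruct M) {a b u : M} (ha : QuasiCentral a)
    (hb : QuasiCentral b) (h : a = b * u) : QuasiCentral u := by
  intro x
  constructor
  · rintro ⟨m, rfl⟩
    obtain ⟨m1, hm1⟩ := (ha (a * m)).mp ⟨m, rfl⟩
    obtain ⟨m2, hm2⟩ := (hb (m1 * b)).mpr ⟨m1, rfl⟩
    refine ⟨m2, GS.cancel_left b _ _ ?_⟩
    rw [← mul_assoc, ← h, hm1, h, ← mul_assoc, hm2, mul_assoc]
  · rintro ⟨m, rfl⟩
    obtain ⟨m1, hm1⟩ := (hb (b * m)).mp ⟨m, rfl⟩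
    obtain ⟨m2, hm2⟩ := (ha (m1 * a)).mpr ⟨m1, rfl⟩
    refine ⟨m2, GS.cancel_left b _ _ ?_⟩
    rw [← mul_assoc, hm1, mul_assoc, ← h, hm2, h, mul_assoc]

theorem quasiCentral_of_eq_mul_right (GS : GarsideStruct M) {a b u : M} (ha : QuasiCentral a)
    (hb : QuasiCentral b) (h : a = u * b) : QuasiCentral u := by
  intro x
  constructor
  · rintro ⟨m, rfl⟩
    obtain ⟨m1, hm1⟩ := (hb (m * b)).mpr ⟨m, rfl⟩
    obtain ⟨m2, hm2⟩ := (ha (a * m1)).mp ⟨m1, rfl⟩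
    refine ⟨m2, GS.cancel_right b _ _ ?_⟩
    rw [mul_assoc, mul_assoc, hm1, ← mul_assoc, ← h, hm2, h, ← mul_assoc]
  · rintro ⟨m, rfl⟩
    obtain ⟨m1, hm1⟩ := (ha (m * a)).mpr ⟨m, rfl⟩
    obtain ⟨m2, hm2⟩ := (hb (b * m1)).mp ⟨m1, rfl⟩
    refine ⟨m2, GS.cancel_right b _ _ ?_⟩
    rw [mul_assoc, ← h, hm1, h, mul_assoc, hm2, ← mul_assoc]

theorem lcmL_comm (GS : GarsideStruct M) (a b : M) : GS.lcmL a b = GS.lcmL b a :=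
  GS.ldvd_antisymm (GS.lcmL_min a b _ (GS.lcmL_right b a) (GS.lcmL_left b a))
    (GS.lcmL_min b a _ (GS.lcmL_right a b) (GS.lcmL_left a b))

theorem lcmL_eq_lcmR (GS : GarsideStruct M) {a b : M} (ha : QuasiCentral a)
    (hb : QuasiCentral b) : GS.lcmL a b = GS.lcmR a b := by
  obtain ⟨w, hw⟩ : GarsideRightDvd (GS.lcmR a b) (GS.lcmL a b) :=
    GS.lcmR_min a b _ ((ha _).mp (GS.lcmL_left a b)) ((hb _).mp (GS.lcmL_right a b))
  obtain ⟨v, hv⟩ : LeftDvd (GS.lcmL a b) (GS.lcmR a b) :=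
    GS.lcmL_min a b _ ((ha _).mpr (GS.lcmR_left a b)) ((hb _).mpr (GS.lcmR_right a b))
  have hwv : GS.lcmL a b = w * GS.lcmL a b * v := by rw [mul_assoc, ← hv, ← hw]
  rw [hv, (GS.eq_one_of_eq_mul_mul hwv).2, mul_one]

theorem quasiCentral_lcmL (GS : GarsideStruct M) {a b : M} (ha : QuasiCentral a)
    (hb : QuasiCentral b) : QuasiCentral (GS.lcmL a b) := by
  intro x
  constructor
  · rintro ⟨m, rfl⟩
    rw [GS.lcmL_eq_lcmR ha hb]
    exact GS.lcmR_min a b _ (ha.rdvd_mul_right (GS.lcmR_left a b) m)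
      (hb.rdvd_mul_right (GS.lcmR_right a b) m)
  · rintro ⟨m, rfl⟩
    exact GS.lcmL_min a b _ (ha.ldvd_mul_left (GS.lcmL_left a b) m)
      (hb.ldvd_mul_left (GS.lcmL_right a b) m)

theorem exists_monAtom_ldvd (GS : GarsideStruct M) {c : M} (hc : c ≠ 1) :
    ∃ u, MonAtom u ∧ LeftDvd u c := by
  induction c using GS.wf.induction with
  | _ x ih =>
    by_cases hx : MonAtom x
    · exact ⟨x, hx, LeftDvd.refl x⟩
    obtain ⟨b, d, hbd, hb, hd⟩ : ∃ b d, x = b * d ∧ b ≠ 1 ∧ d ≠ 1 := by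
      simpa [MonAtom, hc, not_or] using hx
    have hbx : b ≠ x := by
      rintro rfl
      exact hd (GS.cancel_left b d 1 (by rw [mul_one]; exact hbd.symm))
    obtain ⟨u, hu, hub⟩ := ih b ⟨⟨1, d, by rw [one_mul]; exact hbd⟩, hbx⟩ hb
    exact ⟨u, hu, hub.trans ⟨d, hbd⟩⟩

theorem monAtom_of_mul_eq_mul (GS : GarsideStruct M) {p r r' : M} (hp : QuasiCentral p)
    (hr : MonAtom r) (h : r * p = p * r') : MonAtom r' := by
  refine ⟨fun h1 => hr.1 (GS.cancel_right p r 1 (by rw [h, h1, mul_one, one_mul])), ?_⟩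
  intro u v huv
  obtain ⟨u', hu'⟩ := (hp (p * u)).mp ⟨u, rfl⟩
  obtain ⟨v', hv'⟩ := (hp (p * v)).mp ⟨v, rfl⟩
  have hr' : r = u' * v' :=
    GS.cancel_right p _ _ (by rw [h, huv, ← mul_assoc, hu', mul_assoc, hv', mul_assoc])
  refine (hr.2 u' v' hr').imp (fun h1 => ?_) (fun h1 => ?_)
  · exact GS.cancel_left p u 1 (by rw [hu', h1, one_mul, mul_one])
  · exact GS.cancel_left p v 1 (by rw [hv', h1, one_mul, mul_one])

/-- Euclid's lemma for a quasi-central factor `p`, with `r'` the conjugate of `r` past `p`. -/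
theorem ldvd_of_ldvd_mul (GS : GarsideStruct M) {r p q r' : M} (hr : MonAtom r)
    (hp : QuasiCentral p) (hrp : ¬ LeftDvd r p) (h : LeftDvd r (p * q)) (hr' : r * p = p * r') :
    LeftDvd r' q := by
  obtain ⟨s, hs⟩ := GS.lcmL_right r p
  obtain ⟨k, hk⟩ := GS.lcmL_min r p (r * p) ⟨p, rfl⟩ ((hp (r * p)).mpr ⟨r, rfl⟩)
  have hsk : r' = s * k := GS.cancel_left p _ _ (by rw [← hr', hk, hs, mul_assoc])
  rcases (GS.monAtom_of_mul_eq_mul hp hr hr').2 s k hsk with hs1 | hk1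
  · rw [hs1, mul_one] at hs
    exact absurd (hs ▸ GS.lcmL_left r p) hrp
  · rw [hk1, mul_one] at hsk
    obtain ⟨w, hw⟩ := GS.lcmL_min r p (p * q) h ⟨q, rfl⟩
    exact ⟨w, GS.cancel_left p _ _ (by rw [hw, hs, hsk, mul_assoc])⟩

theorem eq_of_ldvd_of_isQZAtom (GS : GarsideStruct M) {a d : M} (ha : IsQZAtom a)
    (hd : QuasiCentral d) (hd1 : d ≠ 1) (h : LeftDvd d a) : d = a := by
  obtain ⟨w, hw⟩ := h
  have hw1 := (ha.2.2 d w hd (GS.quasiCentral_of_eq_mul_left ha.1 hd hw) hw).resolve_left hd1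
  rw [hw, hw1, mul_one]

theorem lcmL_eq_mul (GS : GarsideStruct M) {a b : M} (ha : QuasiCentral a) (hb : IsQZAtom b)
    (hba : ¬ LeftDvd b a) : GS.lcmL a b = a * b := by
  have hL := GS.quasiCentral_lcmL ha hb.1
  obtain ⟨b', hb'⟩ := GS.lcmL_left a b
  obtain ⟨k, hk⟩ := GS.lcmL_min a b (a * b) ⟨b, rfl⟩ ((hb.1 (a * b)).mpr ⟨a, rfl⟩)
  have hbk : b = b' * k := GS.cancel_left a _ _ (by rw [hk, hb', mul_assoc])
  have hb'qc := GS.quasiCentral_of_eq_mul_left hL ha hb'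
  rcases hb.2.2 b' k hb'qc (GS.quasiCentral_of_eq_mul_left hb.1 hb'qc hbk) hbk with h1 | h1
  · rw [h1, mul_one] at hb'
    exact absurd (hb' ▸ GS.lcmL_right a b) hba
  · rw [hb', hbk, h1, mul_one]

theorem isQZAtom_tau (GS : GarsideStruct M) (τ : M → M) (hτqc : ∀ g, QuasiCentral (τ g))
    (hτdvd : ∀ g, LeftDvd g (τ g))
    (hτmin : ∀ g h, QuasiCentral h → LeftDvd g h → LeftDvd (τ g) h) {r : M}
    (hr : MonAtom r) : IsQZAtom (τ r) := by
  refine ⟨hτqc r, fun h1 => hr.1 (GS.eq_one_of_ldvd_one (h1 ▸ hτdvd r)), ?_⟩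
  intro p q hp _ h
  by_cases hrp : LeftDvd r p
  · right
    obtain ⟨c, hc⟩ := hτmin r p hp hrp
    refine (GS.mul_eq_one (d := c) (GS.cancel_left p _ _ ?_)).1
    rw [← mul_assoc, ← h, ← hc, mul_one]
  · left
    obtain ⟨r', hr'⟩ := (hp (r * p)).mpr ⟨r, rfl⟩
    obtain ⟨w, hw⟩ := GS.ldvd_of_ldvd_mul hr hp hrp (h ▸ hτdvd r) hr'
    obtain ⟨y, hy⟩ := (hp (p * w)).mp ⟨w, rfl⟩
    have hτr : τ r = r * y * p := by
      rw [h, hw, ← mul_assoc, ← hr', mul_assoc, hy, ← mul_assoc]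
    obtain ⟨z, hz⟩ :=
      hτmin r (r * y) (GS.quasiCentral_of_eq_mul_right (hτqc r) hp hτr) ⟨y, rfl⟩
    rw [hτr, mul_assoc] at hz
    exact (GS.mul_eq_one (GS.cancel_left (r * y) (p * z) 1 (by rw [mul_one]; exact hz.symm))).1

theorem eq_one_of_ldvd_tau_of_ne (GS : GarsideStruct M) (τ : M → M)
    (hτqc : ∀ g, QuasiCentral (τ g)) (hτdvd : ∀ g, LeftDvd g (τ g))
    (hτmin : ∀ g h, QuasiCentral h → LeftDvd g h → LeftDvd (τ g) h) {s t d : M}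
    (hs : MonAtom s) (ht : MonAtom t) (hst : τ s ≠ τ t) (hds : LeftDvd d (τ s))
    (hdt : LeftDvd d (τ t)) : d = 1 := by
  by_contra hd
  obtain ⟨u, hu, hud⟩ := GS.exists_monAtom_ldvd hd
  have hτu := GS.isQZAtom_tau τ hτqc hτdvd hτmin hu
  have key : ∀ {r}, MonAtom r → LeftDvd d (τ r) → τ u = τ r := fun hr hdr =>
    GS.eq_of_ldvd_of_isQZAtom (GS.isQZAtom_tau τ hτqc hτdvd hτmin hr) hτu.1 hτu.2.1
      (hτmin u _ (hτqc _) (hud.trans hdr))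
  exact hst ((key hs hds).symm.trans (key ht hdt))

end GarsideStruct

end

/-- in a Garside monoid, for atoms `s, t`, with `τ_g` the minimal
quasi-central element left-divisible by `g`, either `τ_s = τ_t` or the gcds of
`τ_s, τ_t` for both divisibility orders are `1`; in either case `τ_s` and
`τ_t` commute. -/
theorem stmt_7 (M : Type*) [Monoid M] (GS : GarsideStruct M)
    (τ : M → M)
    (hτqc : ∀ g, QuasiCentral (τ g))
    (hτdvd : ∀ g, LeftDvd g (τ g))
    (hτmin : ∀ g h, QuasiCentral h → LeftDvd g h → LeftDvd (τ g) h)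
    (s t : M) (hs : MonAtom s) (ht : MonAtom t) :
    (τ s = τ t ∨ (GS.gcdL (τ s) (τ t) = 1 ∧ GS.gcdR (τ s) (τ t) = 1)) ∧
      τ s * τ t = τ t * τ s := by
  by_cases hst : τ s = τ t
  · exact ⟨Or.inl hst, by rw [hst]⟩
  have hd : ∀ {d}, LeftDvd d (τ s) → LeftDvd d (τ t) → d = 1 :=
    GS.eq_one_of_ldvd_tau_of_ne τ hτqc hτdvd hτmin hs ht hst
  have hτs := GS.isQZAtom_tau τ hτqc hτdvd hτmin hs
  have hτt := GS.isQZAtom_tau τ hτqc hτdvd hτmin ht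
  refine ⟨Or.inr ⟨hd (GS.gcdL_left _ _) (GS.gcdL_right _ _),
    hd (GS.ldvd_of_rdvd_of_quasiCentral hτs.1 (GS.gcdR_left _ _))
      (GS.ldvd_of_rdvd_of_quasiCentral hτt.1 (GS.gcdR_right _ _))⟩, ?_⟩
  have hts_ndvd : ¬ LeftDvd (τ t) (τ s) := fun h => hτt.2.1 (hd h (LeftDvd.refl _))
  have hst_ndvd : ¬ LeftDvd (τ s) (τ t) := fun h => hτs.2.1 (hd (LeftDvd.refl _) h)
  calc τ s * τ t = GS.lcmL (τ s) (τ t) := (GS.lcmL_eq_mul hτs.1 hτt hts_ndvd).symm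
    _ = GS.lcmL (τ t) (τ s) := GS.lcmL_comm _ _
    _ = τ t * τ s := GS.lcmL_eq_mul hτt.1 hτs hst_ndvd
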